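/- Let G be a (C4,diamond)-free graph. If AB and A'B' are two edges of F_k(G) that are connected by a ladder (i.e., they are the two end rungs of an induced subgraph of F_k(G) isomorphic to K₂ □ P_m), then A △ B = A' △ B'; that is, both edges correspond to moving a token along the same edge of G. -/

import Mathlib

open Finset

/-- The `k`-token graph of a graph `G`. -/
def tokenGraph {V : Type*} [DecidableEq V] (G : SimpleGraph V) (k : ℕ) :
    SimpleGraph {s : Finset V // s.card = k} where
  Adj A B := ∃ a b : V, G.Adj a b ∧ symmDiff A.1 B.1 = {a, b}
  symm := by
    constructor
    rintro A B ⟨a, b, hab, h⟩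
    exact ⟨a, b, hab, by rwa [symmDiff_comm]⟩
  loopless := by
    constructor
    rintro A ⟨a, b, hab, h⟩
    rw [symmDiff_self] at h
    exact (Finset.insert_ne_empty a {b}) h.symm

/-- `G` contains an induced 4-cycle. -/
def HasInducedC4 {V : Type*} (G : SimpleGraph V) : Prop :=
  ∃ a b c d : V, a ≠ b ∧ a ≠ c ∧ a ≠ d ∧ b ≠ c ∧ b ≠ d ∧ c ≠ d ∧
    G.Adj a b ∧ G.Adj b c ∧ G.Adj c d ∧ G.Adj d a ∧ ¬G.Adj a c ∧ ¬G.Adj b d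

/-- `G` contains an induced diamond (K₄ minus an edge). -/
def HasInducedDiamond {V : Type*} (G : SimpleGraph V) : Prop :=
  ∃ a b c d : V, a ≠ b ∧ a ≠ c ∧ a ≠ d ∧ b ≠ c ∧ b ≠ d ∧ c ≠ d ∧
    G.Adj a b ∧ G.Adj a c ∧ G.Adj a d ∧ G.Adj b c ∧ G.Adj c d ∧ ¬G.Adj b d

/-- A graph is (C4,diamond)-free if it has no induced 4-cycle and no induced
diamond. -/
def C4DiamondFree {V : Type*} (G : SimpleGraph V) : Prop :=
  ¬HasInducedC4 G ∧ ¬HasInducedDiamond G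

/-- `u, v : Fin (m+1) → α` are the vertices of an induced ladder `K₂ □ P_m`
in `F`: the `u i` form one side, the `v i` the other, the rungs are the edges
`u i -- v i`, and there are no further adjacencies or coincidences. -/
def IsLadder {α : Type*} (F : SimpleGraph α) (m : ℕ)
    (u v : Fin (m + 1) → α) : Prop :=
  Function.Injective u ∧ Function.Injective v ∧ (∀ i j, u i ≠ v j) ∧
  (∀ i j : Fin (m + 1),
    F.Adj (u i) (u j) ↔ ((i : ℕ) + 1 = j ∨ (j : ℕ) + 1 = i)) ∧
  (∀ i j : Fin (m + 1),
    F.Adj (v i) (v j) ↔ ((i : ℕ) + 1 = j ∨ (j : ℕ) + 1 = i)) ∧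
  (∀ i j : Fin (m + 1), F.Adj (u i) (v j) ↔ i = j)

/-- The edges `ab` and `a'b'` of `F` are connected by a ladder: either they are
equal (as unordered pairs), or there is an induced ladder in `F` having them as
its two end rungs. -/
def ConnectedByLadder {α : Type*} (F : SimpleGraph α) (a b a' b' : α) : Prop :=
  ({a, b} : Set α) = {a', b'} ∨
  ∃ (m : ℕ) (u v : Fin (m + 1) → α), 1 ≤ m ∧ IsLadder F m u v ∧
    ((u 0 = a ∧ v 0 = b) ∨ (u 0 = b ∧ v 0 = a)) ∧
    ((u (Fin.last m) = a' ∧ v (Fin.last m) = b') ∨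
      (u (Fin.last m) = b' ∧ v (Fin.last m) = a'))

/-
Write S₁ = X ∆ Y, S₂ = X ∆ X', S₃ = Y ∆ Y', S₄ = X' ∆ Y' for the sides of an induced square
X Y Y' X' of F_k(G). They are edges of G, viewed as 2-sets, and S₁ ∆ S₃ = S₂ ∆ S₄ = X ∆ Y' and
S₁ ∆ S₂ = S₃ ∆ S₄ = Y ∆ X' are nonempty non-edges. In a (C4, diamond)-free graph every 4-cycle
spans a K₄. Hence if S₁ meets S₃, so that S₁ ∆ S₃ = {x, y} comes from a path x z y, a second
decomposition along a path x z' y with z' ≠ z would make xy an edge; so the decomposition of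
S₁ ∆ S₃ into two edges is unique, and S₄ = S₁. The same argument applies if S₁ meets S₂, and if
S₁ meets neither, parity forces S₁ ⊆ S₄. Consecutive rungs of a ladder span such a square.
-/

section

variable {V : Type*} {G : SimpleGraph V}

theorem C4DiamondFree.adj_of_cycle (hG : C4DiamondFree G) {a b c d : V}
    (hab : G.Adj a b) (hbc : G.Adj b c) (hcd : G.Adj c d) (hda : G.Adj d a)
    (hac : a ≠ c) (hbd : b ≠ d) : G.Adj a c := by
  by_contra hnac
  by_cases hbd' : G.Adj b d
  · exact hG.2 ⟨b, a, d, c, hab.ne.symm, hbd, hbc.ne, hda.ne.symm, hac, hcd.ne.symm,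
      hab.symm, hbd', hbc, hda.symm, hcd.symm, hnac⟩
  · exact hG.1 ⟨a, b, c, d, hab.ne, hac, hda.ne.symm, hbc.ne, hbd, hcd.ne,
      hab, hbc, hcd, hda, hnac, hbd'⟩

variable [DecidableEq V]

theorem Finset.symmDiff_pair_pair {z x y : V} (hx : z ≠ x) (hy : z ≠ y) (hxy : x ≠ y) :
    symmDiff ({z, x} : Finset V) {z, y} = {x, y} := by
  ext w
  simp only [Finset.mem_symmDiff, Finset.mem_insert, Finset.mem_singleton]
  grind

namespace SimpleGraph

def IsEdgePair (G : SimpleGraph V) (S : Finset V) : Prop :=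
  ∃ a b, G.Adj a b ∧ S = {a, b}

namespace IsEdgePair

variable {S T S' T' : Finset V}

theorem card_eq_two (h : G.IsEdgePair S) : S.card = 2 := by
  obtain ⟨a, b, hab, rfl⟩ := h
  exact Finset.card_pair hab.ne

theorem exists_eq_pair_of_mem (h : G.IsEdgePair S) {z : V} (hz : z ∈ S) :
    ∃ x, G.Adj z x ∧ S = {z, x} := by
  obtain ⟨a, b, hab, rfl⟩ := h
  simp only [Finset.mem_insert, Finset.mem_singleton] at hz
  rcases hz with rfl | rfl
  · exact ⟨b, hab, rfl⟩
  · exact ⟨a, hab.symm, Finset.pair_comm _ _⟩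

theorem exists_eq_pairs_of_not_disjoint (hS : G.IsEdgePair S) (hT : G.IsEdgePair T)
    (hST : ¬Disjoint S T) (hne : S ≠ T) :
    ∃ z x y, G.Adj z x ∧ G.Adj z y ∧ x ≠ y ∧ S = {z, x} ∧ T = {z, y} := by
  obtain ⟨z, hzS, hzT⟩ := Finset.not_disjoint_iff.1 hST
  obtain ⟨x, hzx, rfl⟩ := hS.exists_eq_pair_of_mem hzS
  obtain ⟨y, hzy, rfl⟩ := hT.exists_eq_pair_of_mem hzT
  exact ⟨z, x, y, hzx, hzy, by rintro rfl; exact hne rfl, rfl, rfl⟩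

theorem eq_or_eq_of_symmDiff_eq (hG : C4DiamondFree G) (hS : G.IsEdgePair S)
    (hT : G.IsEdgePair T) (hS' : G.IsEdgePair S') (hT' : G.IsEdgePair T')
    (hST : ¬Disjoint S T) (hne : S ≠ T) (hN : ¬G.IsEdgePair (symmDiff S T))
    (h : symmDiff S' T' = symmDiff S T) : S' = S ∧ T' = T ∨ S' = T ∧ T' = S := by
  obtain ⟨z, x, y, hzx, hzy, hxy, rfl, rfl⟩ := hS.exists_eq_pairs_of_not_disjoint hT hST hne
  rw [Finset.symmDiff_pair_pair hzx.ne hzy.ne hxy] at h hN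
  have hST' : ¬Disjoint S' T' := fun hd => by
    have hcard := congrArg Finset.card h
    rw [hd.symmDiff_eq_sup, Finset.sup_eq_union, Finset.card_union_of_disjoint hd,
      hS'.card_eq_two, hT'.card_eq_two, Finset.card_pair hxy] at hcard
    omega
  have hne' : S' ≠ T' := by
    rintro rfl
    rw [symmDiff_self] at h
    exact Finset.insert_ne_empty _ _ h.symm
  obtain ⟨z', x', y', hzx', hzy', hxy', rfl, rfl⟩ :=
    hS'.exists_eq_pairs_of_not_disjoint hT' hST' hne'
  rw [Finset.symmDiff_pair_pair hzx'.ne hzy'.ne hxy'] at h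
  have hnxy : ¬G.Adj x y := fun hxy => hN ⟨x, y, hxy, rfl⟩
  have hxy_eq : x' = x ∧ y' = y ∨ x' = y ∧ y' = x := by
    rw [← Set.pair_eq_pair_iff, ← Finset.coe_pair, ← Finset.coe_pair, h]
  have hz : z' = z := by
    by_contra hz
    rcases hxy_eq with ⟨rfl, rfl⟩ | ⟨rfl, rfl⟩
    · exact hnxy (hG.adj_of_cycle hzx.symm hzy hzy'.symm hzx' hxy (Ne.symm hz))
    · exact hnxy (hG.adj_of_cycle hzx.symm hzy hzx'.symm hzy' hxy (Ne.symm hz))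
  subst hz
  rcases hxy_eq with ⟨rfl, rfl⟩ | ⟨rfl, rfl⟩
  · exact Or.inl ⟨rfl, rfl⟩
  · exact Or.inr ⟨rfl, rfl⟩

theorem eq_of_symmDiff_eq_symmDiff (hG : C4DiamondFree G) {S₁ S₂ S₃ S₄ : Finset V}
    (h₁ : G.IsEdgePair S₁) (h₂ : G.IsEdgePair S₂) (h₃ : G.IsEdgePair S₃)
    (h₄ : G.IsEdgePair S₄) (h : symmDiff S₁ S₃ = symmDiff S₂ S₄)
    (h₁₃ : S₁ ≠ S₃) (hN₁₃ : ¬G.IsEdgePair (symmDiff S₁ S₃))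
    (h₁₂ : S₁ ≠ S₂) (hN₁₂ : ¬G.IsEdgePair (symmDiff S₁ S₂)) : S₁ = S₄ := by
  by_cases d₁₃ : Disjoint S₁ S₃
  · by_cases d₁₂ : Disjoint S₁ S₂
    · refine Finset.eq_of_subset_of_card_le (fun x hx₁ => ?_)
        (by rw [h₁.card_eq_two, h₄.card_eq_two])
      have hx : x ∈ symmDiff S₂ S₄ :=
        h ▸ Finset.mem_symmDiff.2 (Or.inl ⟨hx₁, Finset.disjoint_left.1 d₁₃ hx₁⟩)
      rcases Finset.mem_symmDiff.1 hx with ⟨hx₂, -⟩ | ⟨hx₄, -⟩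
      · exact absurd hx₂ (Finset.disjoint_left.1 d₁₂ hx₁)
      · exact hx₄
    · have h' : symmDiff S₃ S₄ = symmDiff S₁ S₂ := by
        rw [← symmDiff_eq_bot, symmDiff_symmDiff_symmDiff_comm, symmDiff_comm S₃,
          symmDiff_comm S₄, h, symmDiff_self]
      rcases h₁.eq_or_eq_of_symmDiff_eq hG h₂ h₃ h₄ d₁₂ h₁₂ hN₁₂ h' with ⟨h₃₁, -⟩ | ⟨-, h₄₁⟩
      · exact absurd h₃₁.symm h₁₃
      · exact h₄₁.symm
  · rcases h₁.eq_or_eq_of_symmDiff_eq hG h₃ h₂ h₄ d₁₃ h₁₃ hN₁₃ h.symm with ⟨h₂₁, -⟩ | ⟨-, h₄₁⟩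
    · exact absurd h₂₁.symm h₁₂
    · exact h₄₁.symm

end IsEdgePair

end SimpleGraph

theorem tokenGraph_symmDiff_eq_of_induced_square (hG : C4DiamondFree G) {k : ℕ}
    {X Y X' Y' : {s : Finset V // s.card = k}} (hXY : (tokenGraph G k).Adj X Y)
    (hXX' : (tokenGraph G k).Adj X X') (hYY' : (tokenGraph G k).Adj Y Y')
    (hX'Y' : (tokenGraph G k).Adj X' Y') (hXY' : ¬(tokenGraph G k).Adj X Y')
    (hX'Y : ¬(tokenGraph G k).Adj X' Y) (nXY' : X ≠ Y') (nX'Y : X' ≠ Y) :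
    symmDiff X.1 Y.1 = symmDiff X'.1 Y'.1 := by
  have h₁₃ : symmDiff (symmDiff X.1 Y.1) (symmDiff Y.1 Y'.1) = symmDiff X.1 Y'.1 := by
    rw [← symmDiff_assoc, symmDiff_symmDiff_cancel_right]
  have h₁₂ : symmDiff (symmDiff X.1 Y.1) (symmDiff X.1 X'.1) = symmDiff Y.1 X'.1 := by
    rw [symmDiff_symmDiff_symmDiff_comm, symmDiff_self, bot_symmDiff]
  refine SimpleGraph.IsEdgePair.eq_of_symmDiff_eq_symmDiff hG hXY hXX' hYY' hX'Y' ?_ ?_ ?_ ?_ ?_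
  · rw [h₁₃, ← symmDiff_assoc, symmDiff_symmDiff_cancel_right]
  · rw [symmDiff_comm Y.1]
    exact fun h => nXY' (Subtype.ext (symmDiff_left_injective _ h))
  · rw [h₁₃]
    exact hXY'
  · exact fun h => nX'Y (Subtype.ext (symmDiff_right_injective _ h)).symm
  · rw [h₁₂, symmDiff_comm]
    exact hX'Y

theorem IsLadder.tokenGraph_symmDiff_rung_eq (hG : C4DiamondFree G) {k m : ℕ}
    {u v : Fin (m + 1) → {s : Finset V // s.card = k}} (h : IsLadder (tokenGraph G k) m u v)
    (i : Fin (m + 1)) : symmDiff (u i).1 (v i).1 = symmDiff (u 0).1 (v 0).1 := by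
  obtain ⟨-, -, huv, hu, hv, hrung⟩ := h
  induction i using Fin.induction with
  | zero => rfl
  | succ i ih =>
    have hstep : (i.castSucc : ℕ) + 1 = i.succ := by simp
    refine (tokenGraph_symmDiff_eq_of_induced_square hG ((hrung _ _).2 rfl)
      ((hu _ _).2 (Or.inl hstep)) ((hv _ _).2 (Or.inl hstep)) ((hrung _ _).2 rfl)
      (fun h => (Fin.castSucc_lt_succ (i := i)).ne ((hrung _ _).1 h))
      (fun h => (Fin.castSucc_lt_succ (i := i)).ne' ((hrung _ _).1 h))
      (huv _ _) (huv _ _)).symm.trans ih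

end

theorem ladder_class_same_edge_general {V : Type*} [DecidableEq V]
    (G : SimpleGraph V) (hG : C4DiamondFree G) (k : ℕ)
    (A B A' B' : {s : Finset V // s.card = k})
    (hladder : ConnectedByLadder (tokenGraph G k) A B A' B') :
    symmDiff A.1 B.1 = symmDiff A'.1 B'.1 := by
  have hends : ∀ {X Y P Q : {s : Finset V // s.card = k}},
      X = P ∧ Y = Q ∨ X = Q ∧ Y = P → symmDiff X.1 Y.1 = symmDiff P.1 Q.1 := by
    rintro X Y P Q (⟨rfl, rfl⟩ | ⟨rfl, rfl⟩)
    exacts [rfl, symmDiff_comm _ _]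
  rcases hladder with hpair | ⟨m, u, v, -, hL, hstart, hend⟩
  · exact hends (Set.pair_eq_pair_iff.1 hpair)
  · rw [← hends hstart, ← hends hend]
    exact (IsLadder.tokenGraph_symmDiff_rung_eq hG hL (Fin.last m)).symm

/-- in the k-token graph of a (C4,diamond)-free graph, two edges
connected by a ladder have the same symmetric difference, i.e. they correspond
to moving a token along the same edge of G. -/
theorem ladder_class_same_edge {V : Type*} [Fintype V] [DecidableEq V]
    (G : SimpleGraph V) (hG : C4DiamondFree G) (n k : ℕ)
    (hn : Fintype.card V = n) (hk1 : 1 ≤ k) (hk2 : k ≤ n - 1)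
    (A B A' B' : {s : Finset V // s.card = k})
    (hAB : (tokenGraph G k).Adj A B) (hAB' : (tokenGraph G k).Adj A' B')
    (hladder : ConnectedByLadder (tokenGraph G k) A B A' B') :
    symmDiff A.1 B.1 = symmDiff A'.1 B'.1 :=
  ladder_class_same_edge_general G hG k A B A' B' hladder
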